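/- Fix ℓ ≥ 1 and consider the following random process. Set η_0 := id_ℓ, regarded as a labelled list of pairs (η_{0,1},…,η_{0,ℓ}) with η_{0,m} = {2m−1,2m}; pick I uniformly in {1,…,ℓ} and set S_0 := {I}. For s = 1,…,ℓ−1: pick i uniformly in S_{s−1} and j uniformly in {1,…,ℓ}∖S_{s−1}, independently; pick uniformly one of the two perfect matchings {x,y} of the four elements η_{s−1,i} ∪ η_{s−1,j} other than {η_{s−1,i}, η_{s−1,j}}; set η_{s,i} := x, η_{s,j} := y, η_{s,m} := η_{s−1,m} for m ∉ {i,j}, and S_s := S_{s−1} ∪ {j}. Then the final matching η_{ℓ−1} (forgetting labels) is uniformly distributed on the set of ℓ-PMs η such that the multigraph ({1,…,2ℓ}, η ⊎ id_ℓ) is a single cycle of length 2ℓ. -/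

import Mathlib

open scoped Classical

noncomputable section

/- The ground set `{1, …, 2ℓ}` is encoded as `Fin ℓ × Bool`, the element `(i, b)`
representing `2i+1` (if `b = false`) or `2i+2` (if `b = true`).  Here a matching is
represented as a set of unordered pairs, i.e. a `Finset` of 2-element `Finset`s. -/

/-- `η` is a perfect matching of `Fin ℓ × Bool`, as a partition into pairs. -/
def IsPMset (ℓ : ℕ) (η : Finset (Finset (Fin ℓ × Bool))) : Prop :=
  (∀ p ∈ η, p.card = 2) ∧ ∀ x : Fin ℓ × Bool, ∃! p, p ∈ η ∧ x ∈ p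

/-- The `i`-th pair `{2i+1, 2i+2}` of the identity matching `id_ℓ`. -/
def idPair (ℓ : ℕ) (i : Fin ℓ) : Finset (Fin ℓ × Bool) := {(i, false), (i, true)}

/-- The (simple graph underlying the) multigraph `η ⊎ id_ℓ`: `x` and `y` are joined
if `{x,y}` is a pair of `η` or a pair of `id_ℓ` (i.e. `x.1 = y.1`). -/
def pmGraph (ℓ : ℕ) (η : Finset (Finset (Fin ℓ × Bool))) : SimpleGraph (Fin ℓ × Bool) where
  Adj x y := x ≠ y ∧ (({x, y} : Finset (Fin ℓ × Bool)) ∈ η ∨ x.1 = y.1)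
  symm := by
    constructor
    rintro x y ⟨hne, h | h⟩
    · exact ⟨hne.symm, Or.inl (by rwa [Finset.pair_comm])⟩
    · exact ⟨hne.symm, Or.inr h.symm⟩
  loopless := ⟨fun x h => h.1 rfl⟩

/-- The state of the algorithm: a labelled matching `m : Fin ℓ → pairs` together with
the set `S` of used labels. -/
abbrev LState (ℓ : ℕ) : Type :=
  (Fin ℓ → Finset (Fin ℓ × Bool)) × Finset (Fin ℓ)

/-- Initial law: the labelled matching is `id_ℓ` and `S₀ = {I}` with `I` uniform. -/
def initLaw (ℓ : ℕ) : LState ℓ → ℝ := fun st =>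
  if st.1 = (fun i => idPair ℓ i) ∧ st.2.card = 1 then (ℓ : ℝ)⁻¹ else 0

/-- The ordered rematchings `(x, y)` of two pairs `p, q`: perfect matchings of the four
elements of `p ∪ q` other than `{p, q}` (each of the two unordered rematchings appears
with both orderings, so choosing uniformly here assigns the new pairs to the two labels
uniformly). -/
def rematches (ℓ : ℕ) (p q : Finset (Fin ℓ × Bool)) :
    Finset (Finset (Fin ℓ × Bool) × Finset (Fin ℓ × Bool)) :=
  Finset.univ.filter fun xy =>
    xy.1.card = 2 ∧ xy.2.card = 2 ∧ Disjoint xy.1 xy.2 ∧ xy.1 ∪ xy.2 = p ∪ q ∧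
      ({xy.1, xy.2} : Finset (Finset (Fin ℓ × Bool))) ≠ {p, q}

/-- One step of the algorithm: pick `i` uniformly in `S`, `j` uniformly in `Sᶜ`,
rematch the pairs labelled `i` and `j` uniformly (and differently), and add `j` to `S`. -/
def stepLaw (ℓ : ℕ) (st st' : LState ℓ) : ℝ :=
  ∑ i ∈ st.2, ∑ j ∈ st.2ᶜ, ∑ xy ∈ rematches ℓ (st.1 i) (st.1 j),
    if st'.1 = Function.update (Function.update st.1 i xy.1) j xy.2 ∧ st'.2 = insert j st.2
    then (st.2.card : ℝ)⁻¹ * ((st.2ᶜ.card : ℝ))⁻¹ * ((rematches ℓ (st.1 i) (st.1 j)).card : ℝ)⁻¹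
    else 0

/-- Law of the state of the algorithm after `s` steps. -/
def procLaw (ℓ : ℕ) : ℕ → LState ℓ → ℝ
  | 0 => initLaw ℓ
  | s + 1 => fun st => ∑ st' : LState ℓ, procLaw ℓ s st' * stepLaw ℓ st' st

/-- Law of the final (unlabelled) matching `η_{ℓ-1}` produced by the algorithm. -/
def finalLaw (ℓ : ℕ) (η : Finset (Finset (Fin ℓ × Bool))) : ℝ :=
  ∑ st ∈ Finset.univ.filter (fun st : LState ℓ => Finset.univ.image st.1 = η),
    procLaw ℓ (ℓ - 1) st

/-- The single-cycle `ℓ`-PMs: matchings `η` such that the multigraph `η ⊎ id_ℓ` is a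
single cycle of length `2ℓ` (equivalently, is connected). -/
def singleCycles (ℓ : ℕ) : Finset (Finset (Finset (Fin ℓ × Bool))) :=
  Finset.univ.filter fun η => IsPMset ℓ η ∧ (pmGraph ℓ η).Connected

-- ===================== auxiliary development =====================
namespace SwapAux

variable {ℓ : ℕ}

lemma pmGraph_adj {η : Finset (Finset (Fin ℓ × Bool))} {x y : Fin ℓ × Bool} :
    (pmGraph ℓ η).Adj x y ↔ x ≠ y ∧ (({x, y} : Finset (Fin ℓ × Bool)) ∈ η ∨ x.1 = y.1) :=
  Iff.rfl

/-- Invariant satisfied by all states in the support of `procLaw ℓ s`. -/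
structure Inv (ℓ : ℕ) (s : ℕ) (st : LState ℓ) : Prop where
  cardS : st.2.card = s + 1
  outside : ∀ m, m ∉ st.2 → st.1 m = idPair ℓ m
  card2 : ∀ m, (st.1 m).card = 2
  disj : ∀ m m', m ≠ m' → Disjoint (st.1 m) (st.1 m')
  cover : ∀ x : Fin ℓ × Bool, x.1 ∈ st.2 → ∃ m ∈ st.2, x ∈ st.1 m
  reach : ∀ x y : Fin ℓ × Bool, x.1 ∈ st.2 → y.1 ∈ st.2 →
      (pmGraph ℓ (Finset.univ.image st.1)).Reachable x y

lemma idPair_card (i : Fin ℓ) : (idPair ℓ i).card = 2 := by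
  simp [idPair]

lemma mem_idPair {x : Fin ℓ × Bool} {i : Fin ℓ} : x ∈ idPair ℓ i ↔ x.1 = i := by
  constructor
  · intro h
    rcases Finset.mem_insert.1 h with h | h
    · rw [h]
    · rw [Finset.mem_singleton.1 h]
  · intro h
    rcases x with ⟨a, b⟩
    cases b <;> simp_all [idPair]

lemma idPair_disjoint {i j : Fin ℓ} (h : i ≠ j) : Disjoint (idPair ℓ i) (idPair ℓ j) := by
  rw [Finset.disjoint_left]
  intro a hi hj
  exact h (( mem_idPair.1 hi).symm.trans (mem_idPair.1 hj))

lemma reachable_of_adj_imp {α : Type*} {G G' : SimpleGraph α}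
    (h : ∀ u v, G.Adj u v → G'.Reachable u v) {u v : α} (huv : G.Reachable u v) :
    G'.Reachable u v := by
  obtain ⟨w⟩ := huv
  induction w with
  | nil => rfl
  | cons h' p ih => exact (h _ _ h').trans ih

/-- any element of a rematch pair splits between p and q -/
lemma rematch_split {p q x y : Finset (Fin ℓ × Bool)}
    (hpq : Disjoint p q) (hp : p.card = 2) (hq : q.card = 2)
    (hxy : (x, y) ∈ rematches ℓ p q) :
    ∃ a ∈ p, ∃ c ∈ q, x = {a, c} := by
  obtain ⟨hx2, hy2, hdis, huni, hne⟩ := by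
    simpa [rematches] using hxy
  have hxsub : x ⊆ p ∪ q := huni ▸ Finset.subset_union_left
  have hysub : y ⊆ p ∪ q := huni ▸ Finset.subset_union_right
  -- x meets p
  have hxp : ∃ a, a ∈ x ∩ p := by
    by_contra h
    push_neg at h
    have hxq : x ⊆ q := by
      intro e he
      rcases Finset.mem_union.1 (hxsub he) with h' | h'
      · exact absurd (Finset.mem_inter.2 ⟨he, h'⟩) (h e)
      · exact h'
    have hxq' : x = q := Finset.eq_of_subset_of_card_le hxq (by omega)
    have hyp : y ⊆ p := by
      intro e he
      rcases Finset.mem_union.1 (hysub he) with h' | h'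
      · exact h'
      · exact absurd h' (by
          have := Finset.disjoint_left.1 hdis (hxq' ▸ h' : e ∈ x) he
          exact this.elim)
    have hyp' : y = p := Finset.eq_of_subset_of_card_le hyp (by omega)
    exact hne (by rw [hxq', hyp', Finset.pair_comm])
  have hxq : ∃ c, c ∈ x ∩ q := by
    by_contra h
    push_neg at h
    have hxp2 : x ⊆ p := by
      intro e he
      rcases Finset.mem_union.1 (hxsub he) with h' | h'
      · exact h'
      · exact absurd (Finset.mem_inter.2 ⟨he, h'⟩) (h e)
    have hxp' : x = p := Finset.eq_of_subset_of_card_le hxp2 (by omega)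
    have hyq : y ⊆ q := by
      intro e he
      rcases Finset.mem_union.1 (hysub he) with h' | h'
      · exact absurd h' (by
          have := Finset.disjoint_left.1 hdis (hxp' ▸ h' : e ∈ x) he
          exact this.elim)
      · exact h'
    have hyq' : y = q := Finset.eq_of_subset_of_card_le hyq (by omega)
    exact hne (by rw [hxp', hyq'])
  obtain ⟨a, ha⟩ := hxp
  obtain ⟨c, hc⟩ := hxq
  rcases Finset.mem_inter.1 ha with ⟨hax, hap⟩
  rcases Finset.mem_inter.1 hc with ⟨hcx, hcq⟩
  have hac : a ≠ c := fun h => Finset.disjoint_left.1 hpq hap (h ▸ hcq)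
  refine ⟨a, hap, c, hcq, ?_⟩
  have hsub : ({a, c} : Finset (Fin ℓ × Bool)) ⊆ x := by
    intro e he
    rcases Finset.mem_insert.1 he with h | h
    · exact h ▸ hax
    · exact (Finset.mem_singleton.1 h) ▸ hcx
  exact (Finset.eq_of_subset_of_card_le hsub (by rw [Finset.card_pair hac]; omega)).symm

lemma rematch_symm {p q x y : Finset (Fin ℓ × Bool)}
    (hxy : (x, y) ∈ rematches ℓ p q) : (y, x) ∈ rematches ℓ p q := by
  obtain ⟨hx2, hy2, hdis, huni, hne⟩ := by simpa [rematches] using hxy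
  simp only [rematches, Finset.mem_filter, Finset.mem_univ, true_and]
  refine ⟨hy2, hx2, hdis.symm, by rw [Finset.union_comm]; exact huni, ?_⟩
  rw [Finset.pair_comm]
  exact hne

lemma rematches_nonempty {p q : Finset (Fin ℓ × Bool)}
    (hpq : Disjoint p q) (hp : p.card = 2) (hq : q.card = 2) :
    (rematches ℓ p q).Nonempty := by
  obtain ⟨a, b, hab, hpe⟩ := Finset.card_eq_two.1 hp
  obtain ⟨c, d, hcd, hqe⟩ := Finset.card_eq_two.1 hq
  subst hpe; subst hqe
  have hac : a ≠ c := by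
    intro h
    exact Finset.disjoint_left.1 hpq (show a ∈ ({a,b}:Finset _) by simp)
      (show a ∈ ({c,d}:Finset _) by simp [h])
  have had : a ≠ d := by
    intro h
    exact Finset.disjoint_left.1 hpq (show a ∈ ({a,b}:Finset _) by simp)
      (show a ∈ ({c,d}:Finset _) by simp [h])
  have hbc : b ≠ c := by
    intro h
    exact Finset.disjoint_left.1 hpq (show b ∈ ({a,b}:Finset _) by simp)
      (show b ∈ ({c,d}:Finset _) by simp [h])
  have hbd : b ≠ d := by
    intro h
    exact Finset.disjoint_left.1 hpq (show b ∈ ({a,b}:Finset _) by simp)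
      (show b ∈ ({c,d}:Finset _) by simp [h])
  refine ⟨({a, c}, {b, d}), ?_⟩
  simp only [rematches, Finset.mem_filter, Finset.mem_univ, true_and]
  refine ⟨Finset.card_pair hac, Finset.card_pair hbd, ?_, ?_, ?_⟩
  · rw [Finset.disjoint_left]
    intro e he1 he2
    simp only [Finset.mem_insert, Finset.mem_singleton] at he1 he2
    rcases he1 with rfl | rfl <;> rcases he2 with h | h <;> simp_all
  · ext e
    simp only [Finset.mem_union, Finset.mem_insert, Finset.mem_singleton]
    tauto
  · intro h
    have : ({a, c} : Finset (Fin ℓ × Bool)) ∈ ({({a,b} : Finset (Fin ℓ × Bool)), {c,d}} : Finset (Finset (Fin ℓ × Bool))) := by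
      rw [← h]; simp
    simp only [Finset.mem_insert, Finset.mem_singleton] at this
    rcases this with h' | h'
    · have : c ∈ ({a, b} : Finset (Fin ℓ × Bool)) := by rw [← h']; simp
      simp only [Finset.mem_insert, Finset.mem_singleton] at this
      tauto
    · have : a ∈ ({c, d} : Finset (Fin ℓ × Bool)) := by rw [← h']; simp
      simp only [Finset.mem_insert, Finset.mem_singleton] at this
      tauto

lemma stepLaw_decomp {st st' : LState ℓ} (h : stepLaw ℓ st st' ≠ 0) :
    ∃ i ∈ st.2, ∃ j ∈ st.2ᶜ, ∃ xy ∈ rematches ℓ (st.1 i) (st.1 j),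
      st'.1 = Function.update (Function.update st.1 i xy.1) j xy.2 ∧
      st'.2 = insert j st.2 := by
  obtain ⟨i, hi, h⟩ := Finset.exists_ne_zero_of_sum_ne_zero h
  obtain ⟨j, hj, h⟩ := Finset.exists_ne_zero_of_sum_ne_zero h
  obtain ⟨xy, hxy, h⟩ := Finset.exists_ne_zero_of_sum_ne_zero h
  refine ⟨i, hi, j, hj, xy, hxy, ?_⟩
  by_contra hc
  rw [if_neg hc] at h
  exact h rfl

lemma Inv.step {s : ℕ} {st : LState ℓ} (h : Inv ℓ s st) {i j : Fin ℓ}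
    {xy : Finset (Fin ℓ × Bool) × Finset (Fin ℓ × Bool)}
    (hi : i ∈ st.2) (hj : j ∈ st.2ᶜ) (hxy : xy ∈ rematches ℓ (st.1 i) (st.1 j)) :
    Inv ℓ (s + 1)
      (Function.update (Function.update st.1 i xy.1) j xy.2, insert j st.2) := by
  obtain ⟨m, S⟩ := st
  obtain ⟨x, y⟩ := xy
  simp only at *
  have hjS : j ∉ S := by simpa using hj
  have hij : i ≠ j := fun h' => hjS (h' ▸ hi)
  obtain ⟨hx2, hy2, hdisxy, huni, hnexy⟩ := by
    simpa [rematches] using hxy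
  have hcardS : S.card = s + 1 := h.cardS
  have houts : ∀ k, k ∉ S → m k = idPair ℓ k := h.outside
  have hcard2 : ∀ k, (m k).card = 2 := h.card2
  have hdisj : ∀ k k', k ≠ k' → Disjoint (m k) (m k') := h.disj
  have hcover : ∀ e : Fin ℓ × Bool, e.1 ∈ S → ∃ k ∈ S, e ∈ m k := h.cover
  have hreach : ∀ u v : Fin ℓ × Bool, u.1 ∈ S → v.1 ∈ S →
      (pmGraph ℓ (Finset.univ.image m)).Reachable u v := h.reach
  have hqid : m j = idPair ℓ j := houts j hjS
  have hpq : Disjoint (m i) (m j) := hdisj i j hij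
  have hxsub : x ⊆ m i ∪ m j := huni ▸ Finset.subset_union_left
  have hysub : y ⊆ m i ∪ m j := huni ▸ Finset.subset_union_right
  set m' := Function.update (Function.update m i x) j y with hm'
  have hm'j : m' j = y := by
    simp [hm']
  have hm'i : m' i = x := by
    rw [hm', Function.update_of_ne hij, Function.update_self]
  have hm'k : ∀ k, k ≠ i → k ≠ j → m' k = m k := fun k hki hkj => by
    rw [hm', Function.update_of_ne hkj, Function.update_of_ne hki]
  have msub : ∀ k ∈ S, ∀ e ∈ m k, e.1 ∈ S := by
    intro k hk e he
    by_contra hnot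
    have hek : e.1 ≠ k := fun h' => hnot (h' ▸ hk)
    have : e ∈ m e.1 := by
      rw [houts e.1 hnot]
      exact mem_idPair.2 rfl
    exact (Finset.disjoint_left.1 (hdisj e.1 k hek) this he).elim
  -- splits
  obtain ⟨a, hap, c, hcq, hxac⟩ :=
    rematch_split hpq (hcard2 i) (hcard2 j) hxy
  obtain ⟨b, hbp, d, hdq, hybd⟩ :=
    rematch_split hpq (hcard2 i) (hcard2 j) (rematch_symm hxy)
  have hax : a ∈ x := by rw [hxac]; simp
  have hcx : c ∈ x := by rw [hxac]; simp
  have hby : b ∈ y := by rw [hybd]; simp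
  have hdy : d ∈ y := by rw [hybd]; simp
  have hab : a ≠ b := fun h' => Finset.disjoint_left.1 hdisxy hax (h' ▸ hby)
  have hcd : c ≠ d := fun h' => Finset.disjoint_left.1 hdisxy hcx (h' ▸ hdy)
  have hac : a ≠ c := fun h' => Finset.disjoint_left.1 hpq hap (h' ▸ hcq)
  have hbd : b ≠ d := fun h' => Finset.disjoint_left.1 hpq hbp (h' ▸ hdq)
  have hpab : m i = {a, b} := by
    refine (Finset.eq_of_subset_of_card_le ?_ ?_).symm
    · intro e he
      rcases Finset.mem_insert.1 he with h' | h'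
      · exact h' ▸ hap
      · exact (Finset.mem_singleton.1 h') ▸ hbp
    · rw [Finset.card_pair hab, hcard2 i]
  have hcj : c.1 = j := mem_idPair.1 (hqid ▸ hcq)
  have hdj : d.1 = j := mem_idPair.1 (hqid ▸ hdq)
  have haS : a.1 ∈ S := msub i hi a hap
  -- disjointness helpers
  have hdx : ∀ k, k ≠ i → k ≠ j → Disjoint x (m k) := by
    intro k hki hkj
    exact Finset.disjoint_of_subset_left hxsub
      (Finset.disjoint_union_left.2 ⟨hdisj i k (Ne.symm hki), hdisj j k (Ne.symm hkj)⟩)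
  have hdy' : ∀ k, k ≠ i → k ≠ j → Disjoint y (m k) := by
    intro k hki hkj
    exact Finset.disjoint_of_subset_left hysub
      (Finset.disjoint_union_left.2 ⟨hdisj i k (Ne.symm hki), hdisj j k (Ne.symm hkj)⟩)
  -- graphs
  have hmem' : ∀ k, m' k ∈ Finset.univ.image m' := fun k =>
    Finset.mem_image.2 ⟨k, Finset.mem_univ k, rfl⟩
  have hadj_ac : (pmGraph ℓ (Finset.univ.image m')).Adj a c := by
    refine pmGraph_adj.2 ⟨hac, Or.inl ?_⟩
    rw [← hxac, ← hm'i]; exact hmem' i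
  have hadj_db : (pmGraph ℓ (Finset.univ.image m')).Adj d b := by
    refine pmGraph_adj.2 ⟨Ne.symm hbd, Or.inl ?_⟩
    rw [Finset.pair_comm, ← hybd, ← hm'j]; exact hmem' j
  have hstep : ∀ u v, (pmGraph ℓ (Finset.univ.image m)).Adj u v →
      (pmGraph ℓ (Finset.univ.image m')).Reachable u v := by
    intro u v huv'
    obtain ⟨huv, hcase | hcase⟩ := pmGraph_adj.1 huv'
    · obtain ⟨k, -, hk⟩ := Finset.mem_image.1 hcase
      rcases eq_or_ne k j with hkj | hkj
      · -- pair j is an id pair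
        have hu : u ∈ m j := by rw [← hkj, hk]; simp
        have hv : v ∈ m j := by rw [← hkj, hk]; simp
        refine SimpleGraph.Adj.reachable (pmGraph_adj.2 ⟨huv, Or.inr ?_⟩)
        rw [mem_idPair.1 (hqid ▸ hu), mem_idPair.1 (hqid ▸ hv)]
      rcases eq_or_ne k i with hki | hki
      · -- pair i = {a,b}; reroute a - c - d - b
        have hr : (pmGraph ℓ (Finset.univ.image m')).Reachable a b := by
          refine hadj_ac.reachable.trans (SimpleGraph.Reachable.trans ?_ hadj_db.reachable)
          exact SimpleGraph.Adj.reachable (pmGraph_adj.2 ⟨hcd, Or.inr (hcj.trans hdj.symm)⟩)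
        have hu : u ∈ m i := by rw [← hki, hk]; simp
        have hv : v ∈ m i := by rw [← hki, hk]; simp
        rw [hpab] at hu hv
        rcases Finset.mem_insert.1 hu with rfl | hu' <;>
          rcases Finset.mem_insert.1 hv with rfl | hv'
        · exact (huv rfl).elim
        · rw [Finset.mem_singleton.1 hv']; exact hr
        · rw [Finset.mem_singleton.1 hu']; exact hr.symm
        · rw [Finset.mem_singleton.1 hu', Finset.mem_singleton.1 hv']
      · refine SimpleGraph.Adj.reachable (pmGraph_adj.2 ⟨huv, Or.inl ?_⟩)
        rw [← hk, ← hm'k k hki hkj]; exact hmem' k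
    · exact SimpleGraph.Adj.reachable (pmGraph_adj.2 ⟨huv, Or.inr hcase⟩)
  have hto : ∀ u : Fin ℓ × Bool, u.1 ∈ insert j S →
      (pmGraph ℓ (Finset.univ.image m')).Reachable u a := by
    intro u hu
    rcases Finset.mem_insert.1 hu with huj | huS
    · have hrc : (pmGraph ℓ (Finset.univ.image m')).Reachable u c := by
        rcases eq_or_ne u c with rfl | huc
        · rfl
        · exact SimpleGraph.Adj.reachable (pmGraph_adj.2 ⟨huc, Or.inr (huj.trans hcj.symm)⟩)
      exact hrc.trans hadj_ac.symm.reachable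
    · exact reachable_of_adj_imp hstep (hreach u a huS haS)
  have F1 : (insert j S).card = s + 1 + 1 := by
    rw [Finset.card_insert_of_notMem hjS, hcardS]
  have F2 : ∀ k, k ∉ insert j S → m' k = idPair ℓ k := by
    intro k hk
    simp only [Finset.mem_insert, not_or] at hk
    have hki : k ≠ i := fun h' => hk.2 (h' ▸ hi)
    rw [hm'k k hki hk.1]
    exact houts k hk.2
  have F3 : ∀ k, (m' k).card = 2 := by
    intro k
    rcases eq_or_ne k j with hkj | hkj
    · rw [hkj, hm'j]; exact hy2
    rcases eq_or_ne k i with hki | hki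
    · rw [hki, hm'i]; exact hx2
    · rw [hm'k k hki hkj]; exact hcard2 k
  have F4 : ∀ k k', k ≠ k' → Disjoint (m' k) (m' k') := by
    intro k k' hkk'
    rcases eq_or_ne k j with hkj | hkj <;> rcases eq_or_ne k' j with hk'j | hk'j
    · exact (hkk' (hkj.trans hk'j.symm)).elim
    · rw [hkj, hm'j]
      rcases eq_or_ne k' i with hk'i | hk'i
      · rw [hk'i, hm'i]; exact hdisxy.symm
      · rw [hm'k k' hk'i hk'j]; exact hdy' k' hk'i hk'j
    · rw [hk'j, hm'j]
      rcases eq_or_ne k i with hki | hki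
      · rw [hki, hm'i]; exact hdisxy
      · rw [hm'k k hki hkj]; exact (hdy' k hki hkj).symm
    rcases eq_or_ne k i with hki | hki <;> rcases eq_or_ne k' i with hk'i | hk'i
    · exact (hkk' (hki.trans hk'i.symm)).elim
    · rw [hki, hm'i, hm'k k' hk'i hk'j]; exact hdx k' hk'i hk'j
    · rw [hk'i, hm'i, hm'k k hki hkj]; exact (hdx k hki hkj).symm
    · rw [hm'k k hki hkj, hm'k k' hk'i hk'j]; exact hdisj k k' hkk'
  have F5 : ∀ e : Fin ℓ × Bool, e.1 ∈ insert j S → ∃ k ∈ insert j S, e ∈ m' k := by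
    intro e he
    rcases Finset.mem_insert.1 he with hej | heS
    · have : e ∈ x ∪ y := by
        rw [huni]
        exact Finset.mem_union_right (m i) (hqid ▸ mem_idPair.2 hej)
      rcases Finset.mem_union.1 this with h' | h'
      · exact ⟨i, Finset.mem_insert_of_mem hi, by rw [hm'i]; exact h'⟩
      · exact ⟨j, Finset.mem_insert_self j S, by rw [hm'j]; exact h'⟩
    · obtain ⟨k, hkS, hek⟩ := hcover e heS
      rcases eq_or_ne k j with hkj | hkj
      · exact ((hkj ▸ hjS) hkS).elim
      rcases eq_or_ne k i with hki | hki
      · have : e ∈ x ∪ y := by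
          rw [huni]
          exact Finset.mem_union_left (m j) (hki ▸ hek)
        rcases Finset.mem_union.1 this with h' | h'
        · exact ⟨i, Finset.mem_insert_of_mem hi, by rw [hm'i]; exact h'⟩
        · exact ⟨j, Finset.mem_insert_self j S, by rw [hm'j]; exact h'⟩
      · exact ⟨k, Finset.mem_insert_of_mem hkS, by rw [hm'k k hki hkj]; exact hek⟩
  have F6 : ∀ u v : Fin ℓ × Bool, u.1 ∈ insert j S → v.1 ∈ insert j S →
      (pmGraph ℓ (Finset.univ.image m')).Reachable u v := by
    intro u v hu hv
    exact (hto u hu).trans (hto v hv).symm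
  exact ⟨F1, F2, F3, F4, F5, F6⟩

lemma procLaw_support : ∀ (s : ℕ) (st : LState ℓ), procLaw ℓ s st ≠ 0 → Inv ℓ s st := by
  intro s
  induction s with
  | zero =>
    intro st h
    rw [procLaw] at h
    have hcond : st.1 = (fun i => idPair ℓ i) ∧ st.2.card = 1 := by
      by_contra hc
      rw [initLaw, if_neg hc] at h
      exact h rfl
    obtain ⟨hfun, hcard⟩ := hcond
    obtain ⟨w, hw⟩ := Finset.card_eq_one.1 hcard
    refine ⟨by rw [hcard], fun m _ => by rw [hfun], fun m => by rw [hfun]; exact idPair_card m,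
      fun m m' hmm' => by rw [hfun]; exact idPair_disjoint hmm', ?_, ?_⟩
    · intro e he
      exact ⟨e.1, he, by rw [hfun]; exact mem_idPair.2 rfl⟩
    · intro u v hu hv
      rw [hw, Finset.mem_singleton] at hu hv
      rcases eq_or_ne u v with rfl | huv
      · rfl
      · exact SimpleGraph.Adj.reachable (pmGraph_adj.2 ⟨huv, Or.inr (hu.trans hv.symm)⟩)
  | succ s ih =>
    intro st h
    rw [procLaw] at h
    obtain ⟨st', -, h⟩ := Finset.exists_ne_zero_of_sum_ne_zero h
    have h1 : procLaw ℓ s st' ≠ 0 := fun h' => h (by rw [h', zero_mul])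
    have h2 : stepLaw ℓ st' st ≠ 0 := fun h' => h (by rw [h', mul_zero])
    obtain ⟨i, hi, j, hj, xy, hxy, he1, he2⟩ := stepLaw_decomp h2
    have hst : st = (Function.update (Function.update st'.1 i xy.1) j xy.2, insert j st'.2) :=
      Prod.ext he1 he2
    rw [hst]
    exact (ih st' h1).step hi hj hxy

lemma final_support (hℓ : 1 ≤ ℓ) {η : Finset (Finset (Fin ℓ × Bool))}
    (h : finalLaw ℓ η ≠ 0) : η ∈ singleCycles ℓ := by
  obtain ⟨st, hst, hne⟩ := Finset.exists_ne_zero_of_sum_ne_zero h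
  rw [Finset.mem_filter] at hst
  obtain ⟨-, himg⟩ := hst
  have hInv := procLaw_support (ℓ - 1) st hne
  have hSuniv : st.2 = Finset.univ := by
    apply Finset.eq_univ_of_card
    rw [hInv.cardS, Fintype.card_fin]
    omega
  have hcov : ∀ e : Fin ℓ × Bool, ∃ m ∈ st.2, e ∈ st.1 m := fun e =>
    hInv.cover e (hSuniv ▸ Finset.mem_univ e.1)
  rw [singleCycles, Finset.mem_filter]
  refine ⟨Finset.mem_univ η, ⟨?_, ?_⟩, ?_⟩
  · intro pp hpp
    rw [← himg] at hpp
    obtain ⟨k, -, hk⟩ := Finset.mem_image.1 hpp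
    rw [← hk]
    exact hInv.card2 k
  · intro e
    obtain ⟨k, -, hek⟩ := hcov e
    refine ⟨st.1 k, ⟨himg ▸ Finset.mem_image.2 ⟨k, Finset.mem_univ k, rfl⟩, hek⟩, ?_⟩
    rintro pp ⟨hpp, hepp⟩
    rw [← himg] at hpp
    obtain ⟨k', -, hk'⟩ := Finset.mem_image.1 hpp
    rcases eq_or_ne k' k with rfl | hkk'
    · exact hk'.symm
    · exact absurd hepp (by
        rw [← hk']
        exact fun h' => Finset.disjoint_left.1 (hInv.disj k' k hkk') h' hek)
  · rw [SimpleGraph.connected_iff]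
    constructor
    · intro u v
      have := hInv.reach u v (hSuniv ▸ Finset.mem_univ u.1) (hSuniv ▸ Finset.mem_univ v.1)
      rwa [himg] at this
    · exact ⟨(⟨0, hℓ⟩, false)⟩

lemma sum_initLaw (hℓ : 1 ≤ ℓ) : ∑ st : LState ℓ, initLaw ℓ st = 1 := by
  rw [Fintype.sum_prod_type]
  simp only [initLaw]
  have h1 : ∀ f : Fin ℓ → Finset (Fin ℓ × Bool),
      (∑ S : Finset (Fin ℓ), if f = (fun i => idPair ℓ i) ∧ S.card = 1 then (ℓ : ℝ)⁻¹ else 0)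
      = if f = (fun i => idPair ℓ i) then
          (∑ S : Finset (Fin ℓ), if S.card = 1 then (ℓ : ℝ)⁻¹ else 0) else 0 := by
    intro f
    by_cases hf : f = (fun i => idPair ℓ i)
    · rw [if_pos hf]
      exact Finset.sum_congr rfl fun S _ => by rw [if_congr (and_iff_right hf) rfl rfl]
    · rw [if_neg hf]
      exact Finset.sum_eq_zero fun S _ => by
        rw [if_neg (fun hc => hf hc.1)]
  rw [Finset.sum_congr rfl fun f _ => h1 f, Finset.sum_ite_eq' Finset.univ,
    if_pos (Finset.mem_univ _), ← Finset.sum_filter]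
  have h2 : (Finset.univ.filter (fun S : Finset (Fin ℓ) => S.card = 1))
      = Finset.univ.image (fun i : Fin ℓ => ({i} : Finset (Fin ℓ))) := by
    ext S
    simp only [Finset.mem_filter, Finset.mem_univ, true_and, Finset.mem_image,
      Finset.card_eq_one]
    constructor
    · rintro ⟨a, ha⟩
      exact ⟨a, ha.symm⟩
    · rintro ⟨a, ha⟩
      exact ⟨a, ha.symm⟩
  rw [Finset.sum_const, h2, Finset.card_image_of_injective _ Finset.singleton_injective,
    Finset.card_univ, Fintype.card_fin, nsmul_eq_mul]
  rw [mul_inv_cancel₀]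
  exact Nat.cast_ne_zero.2 (by omega)

lemma point_sum (A : Fin ℓ → Finset (Fin ℓ × Bool)) (B : Finset (Fin ℓ)) (c : ℝ) :
    (∑ st' : LState ℓ, if st'.1 = A ∧ st'.2 = B then c else 0) = c := by
  have : ∀ st' : LState ℓ, (if st'.1 = A ∧ st'.2 = B then c else 0)
      = if st' = (A, B) then c else 0 := fun st' => by
    by_cases h : st' = (A, B)
    · rw [if_pos h, if_pos ⟨congrArg Prod.fst h, congrArg Prod.snd h⟩]
    · rw [if_neg h, if_neg (fun hc => h (Prod.ext hc.1 hc.2))]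
  rw [Finset.sum_congr rfl fun st' _ => this st', Finset.sum_ite_eq' Finset.univ,
    if_pos (Finset.mem_univ _)]

lemma sum_stepLaw {s : ℕ} {st : LState ℓ} (hInv : Inv ℓ s st) (hlt : s + 1 < ℓ) :
    ∑ st' : LState ℓ, stepLaw ℓ st st' = 1 := by
  have hSne : ((st.2.card : ℝ)) ≠ 0 := by
    rw [hInv.cardS]; exact Nat.cast_ne_zero.2 (by omega)
  have hSccard : (st.2ᶜ).card = ℓ - (s + 1) := by
    rw [Finset.card_compl, hInv.cardS, Fintype.card_fin]
  have hScne : (((st.2ᶜ).card : ℝ)) ≠ 0 := by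
    rw [hSccard]; exact Nat.cast_ne_zero.2 (by omega)
  unfold stepLaw
  rw [Finset.sum_comm]
  have hmain : ∀ i ∈ st.2,
      (∑ st' : LState ℓ, ∑ j ∈ st.2ᶜ, ∑ xy ∈ rematches ℓ (st.1 i) (st.1 j),
        if st'.1 = Function.update (Function.update st.1 i xy.1) j xy.2 ∧
            st'.2 = insert j st.2
        then (st.2.card : ℝ)⁻¹ * ((st.2ᶜ.card : ℝ))⁻¹ *
          ((rematches ℓ (st.1 i) (st.1 j)).card : ℝ)⁻¹ else 0)
      = (st.2.card : ℝ)⁻¹ := by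
    intro i hi
    rw [Finset.sum_comm]
    have hj : ∀ j ∈ st.2ᶜ,
        (∑ st' : LState ℓ, ∑ xy ∈ rematches ℓ (st.1 i) (st.1 j),
          if st'.1 = Function.update (Function.update st.1 i xy.1) j xy.2 ∧
              st'.2 = insert j st.2
          then (st.2.card : ℝ)⁻¹ * ((st.2ᶜ.card : ℝ))⁻¹ *
            ((rematches ℓ (st.1 i) (st.1 j)).card : ℝ)⁻¹ else 0)
        = (st.2.card : ℝ)⁻¹ * ((st.2ᶜ.card : ℝ))⁻¹ := by
      intro j hj
      rw [Finset.sum_comm]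
      have hij : i ≠ j := fun h' => (by simpa using hj : j ∉ st.2) (h' ▸ hi)
      have hRne : ((rematches ℓ (st.1 i) (st.1 j)).card : ℝ) ≠ 0 := by
        obtain ⟨xy0, hxy0⟩ :=
          rematches_nonempty (hInv.disj i j hij) (hInv.card2 i) (hInv.card2 j)
        exact Nat.cast_ne_zero.2 (Finset.card_ne_zero_of_mem hxy0)
      rw [Finset.sum_congr rfl fun xy _ => point_sum _ _ _, Finset.sum_const, nsmul_eq_mul]
      field_simp
    rw [Finset.sum_congr rfl hj, Finset.sum_const, nsmul_eq_mul]
    field_simp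
  rw [Finset.sum_congr rfl hmain, Finset.sum_const, nsmul_eq_mul]
  field_simp

lemma sum_procLaw (hℓ : 1 ≤ ℓ) : ∀ s : ℕ, s ≤ ℓ - 1 →
    ∑ st : LState ℓ, procLaw ℓ s st = 1 := by
  intro s
  induction s with
  | zero => intro _; exact sum_initLaw hℓ
  | succ s ih =>
    intro hs
    have hsum : ∑ st : LState ℓ, procLaw ℓ (s + 1) st
        = ∑ st' : LState ℓ, procLaw ℓ s st' * (∑ st : LState ℓ, stepLaw ℓ st' st) := by
      rw [show (fun st => procLaw ℓ (s+1) st) = fun st =>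
        ∑ st' : LState ℓ, procLaw ℓ s st' * stepLaw ℓ st' st from rfl]
      rw [Finset.sum_comm]
      exact Finset.sum_congr rfl fun st' _ => (Finset.mul_sum _ _ _).symm
    rw [hsum]
    have : ∀ st' : LState ℓ, st' ∈ (Finset.univ : Finset (LState ℓ)) →
        procLaw ℓ s st' * (∑ st : LState ℓ, stepLaw ℓ st' st) = procLaw ℓ s st' := by
      intro st' _
      rcases eq_or_ne (procLaw ℓ s st') 0 with h0 | h0
      · rw [h0, zero_mul]
      · rw [sum_stepLaw (procLaw_support s st' h0) (by omega), mul_one]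
    rw [Finset.sum_congr rfl this]
    exact ih (by omega)

lemma sum_finalLaw (hℓ : 1 ≤ ℓ) :
    ∑ η : Finset (Finset (Fin ℓ × Bool)), finalLaw ℓ η = 1 := by
  unfold finalLaw
  rw [Finset.sum_fiberwise_of_maps_to (fun st _ => Finset.mem_univ _)]
  exact sum_procLaw hℓ (ℓ - 1) le_rfl

/-! ### The hyperoctahedral symmetry action -/

def gmap (σ : Equiv.Perm (Fin ℓ)) (ε : Fin ℓ → Bool) : (Fin ℓ × Bool) ≃ (Fin ℓ × Bool) where
  toFun x := (σ x.1, xor (ε x.1) x.2)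
  invFun y := (σ.symm y.1, xor (ε (σ.symm y.1)) y.2)
  left_inv := by
    rintro ⟨i, b⟩
    simp only [Equiv.symm_apply_apply]
    cases h : ε i <;> cases b <;> simp [h]
  right_inv := by
    rintro ⟨i, b⟩
    simp only [Equiv.apply_symm_apply]
    cases h : ε (σ.symm i) <;> cases b <;> simp [h]

variable (σ : Equiv.Perm (Fin ℓ)) (ε : Fin ℓ → Bool)

def actF : Finset (Fin ℓ × Bool) ≃ Finset (Fin ℓ × Bool) := (gmap σ ε).finsetCongr

def actS : LState ℓ ≃ LState ℓ :=
  (Equiv.arrowCongr σ (actF σ ε)).prodCongr σ.finsetCongr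

def actM (η : Finset (Finset (Fin ℓ × Bool))) : Finset (Finset (Fin ℓ × Bool)) :=
  η.image (actF σ ε)

lemma gmap_fst (x : Fin ℓ × Bool) : ((gmap σ ε) x).1 = σ x.1 := rfl

lemma actF_card (p : Finset (Fin ℓ × Bool)) : (actF σ ε p).card = p.card :=
  Finset.card_map _

lemma mem_actF {a : Fin ℓ × Bool} {p : Finset (Fin ℓ × Bool)} :
    a ∈ actF σ ε p ↔ (gmap σ ε).symm a ∈ p := Finset.mem_map_equiv

lemma actF_union (p q : Finset (Fin ℓ × Bool)) :
    actF σ ε (p ∪ q) = actF σ ε p ∪ actF σ ε q := by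
  ext a
  simp [mem_actF, Finset.mem_union]

lemma actF_disjoint {p q : Finset (Fin ℓ × Bool)} :
    Disjoint (actF σ ε p) (actF σ ε q) ↔ Disjoint p q := by
  constructor
  · intro h
    rw [Finset.disjoint_left] at h ⊢
    intro a hp hq
    refine h (a := gmap σ ε a) ((mem_actF σ ε).2 ?_) ((mem_actF σ ε).2 ?_) <;>
      simpa using ‹_›
  · intro h
    rw [Finset.disjoint_left] at h ⊢
    intro a hp hq
    exact h ((mem_actF σ ε).1 hp) ((mem_actF σ ε).1 hq)

lemma actF_pair (x y : Finset (Fin ℓ × Bool)) :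
    ({actF σ ε x, actF σ ε y} : Finset (Finset (Fin ℓ × Bool)))
      = ({x, y} : Finset (Finset (Fin ℓ × Bool))).image (actF σ ε) := by
  rw [Finset.image_insert, Finset.image_singleton]

lemma actF_idPair (i : Fin ℓ) : actF σ ε (idPair ℓ i) = idPair ℓ (σ i) := by
  have : actF σ ε (idPair ℓ i)
      = {(σ i, xor (ε i) false), (σ i, xor (ε i) true)} := by
    rw [actF, idPair, Equiv.finsetCongr_apply, Finset.map_insert, Finset.map_singleton]
    rfl
  rw [this, idPair]
  cases h : ε i <;> simp [h, Finset.pair_comm]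

lemma rematches_equivariant (p q : Finset (Fin ℓ × Bool)) :
    rematches ℓ (actF σ ε p) (actF σ ε q)
      = (rematches ℓ p q).image (fun xy => (actF σ ε xy.1, actF σ ε xy.2)) := by
  ext xy'
  simp only [rematches, Finset.mem_filter, Finset.mem_univ, true_and, Finset.mem_image]
  constructor
  · rintro ⟨h1, h2, h3, h4, h5⟩
    refine ⟨((actF σ ε).symm xy'.1, (actF σ ε).symm xy'.2), ⟨?_, ?_, ?_, ?_, ?_⟩, ?_⟩
    · rw [← actF_card σ ε, Equiv.apply_symm_apply]; exact h1
    · rw [← actF_card σ ε, Equiv.apply_symm_apply]; exact h2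
    · rw [← actF_disjoint σ ε, Equiv.apply_symm_apply, Equiv.apply_symm_apply]; exact h3
    · apply (actF σ ε).injective
      rw [actF_union, Equiv.apply_symm_apply, Equiv.apply_symm_apply, h4, actF_union]
    · intro hc
      apply h5
      rw [← Equiv.apply_symm_apply (actF σ ε) xy'.1,
        ← Equiv.apply_symm_apply (actF σ ε) xy'.2, actF_pair, hc, ← actF_pair]
    · rw [Equiv.apply_symm_apply, Equiv.apply_symm_apply]
  · rintro ⟨⟨x, y⟩, ⟨h1, h2, h3, h4, h5⟩, rfl⟩
    refine ⟨by rw [actF_card]; exact h1, by rw [actF_card]; exact h2,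
      (actF_disjoint σ ε).2 h3, ?_, ?_⟩
    · rw [← actF_union, ← actF_union, h4]
    · intro hc
      apply h5
      rw [actF_pair, actF_pair] at hc
      exact Finset.image_injective (actF σ ε).injective hc

lemma actS_fst (st : LState ℓ) (k : Fin ℓ) :
    (actS σ ε st).1 k = actF σ ε (st.1 (σ.symm k)) := rfl

lemma actS_snd (st : LState ℓ) : (actS σ ε st).2 = st.2.map σ.toEmbedding := rfl

lemma map_compl (S : Finset (Fin ℓ)) : (S.map σ.toEmbedding)ᶜ = Sᶜ.map σ.toEmbedding := by
  ext k
  simp only [Finset.mem_compl, Finset.mem_map_equiv]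

lemma arrowCongr_update (f : Fin ℓ → Finset (Fin ℓ × Bool)) (a : Fin ℓ)
    (b : Finset (Fin ℓ × Bool)) :
    (Equiv.arrowCongr σ (actF σ ε)) (Function.update f a b)
      = Function.update ((Equiv.arrowCongr σ (actF σ ε)) f) (σ a) (actF σ ε b) := by
  funext k
  simp only [Equiv.arrowCongr_apply, Function.comp_apply]
  rcases eq_or_ne k (σ a) with hk | hk
  · rw [hk, Function.update_self, Equiv.symm_apply_apply, Function.update_self]
  · have : σ.symm k ≠ a := fun h' => hk (by rw [← h', Equiv.apply_symm_apply])
    rw [Function.update_of_ne this, Function.update_of_ne hk]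
    simp [Equiv.arrowCongr_apply]

lemma initLaw_equivariant (st : LState ℓ) : initLaw ℓ (actS σ ε st) = initLaw ℓ st := by
  unfold initLaw
  have hcard : (actS σ ε st).2.card = st.2.card := by
    rw [actS_snd, Finset.card_map]
  have hfun : ((actS σ ε st).1 = fun i => idPair ℓ i) ↔ (st.1 = fun i => idPair ℓ i) := by
    constructor
    · intro h
      funext k
      have := congrFun h (σ k)
      rw [actS_fst, Equiv.symm_apply_apply] at this
      apply (actF σ ε).injective
      rw [this, actF_idPair]
    · intro h
      funext k
      rw [actS_fst, congrFun h (σ.symm k), actF_idPair, Equiv.apply_symm_apply]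
  rw [if_congr (and_congr hfun (by rw [hcard])) rfl rfl]

lemma stepLaw_equivariant (st st' : LState ℓ) :
    stepLaw ℓ (actS σ ε st) (actS σ ε st') = stepLaw ℓ st st' := by
  unfold stepLaw
  rw [actS_snd σ ε st, map_compl, Finset.sum_map, Finset.sum_congr rfl]
  intro i hi
  rw [Finset.sum_map, Finset.sum_congr rfl]
  intro j hj
  have hfi : (actS σ ε st).1 (σ.toEmbedding i) = actF σ ε (st.1 i) := by
    rw [actS_fst]
    simp
  have hfj : (actS σ ε st).1 (σ.toEmbedding j) = actF σ ε (st.1 j) := by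
    rw [actS_fst]
    simp
  have hinj : ∀ a ∈ rematches ℓ (st.1 i) (st.1 j), ∀ b ∈ rematches ℓ (st.1 i) (st.1 j),
      (fun xy => (actF σ ε xy.1, actF σ ε xy.2)) a = (fun xy => (actF σ ε xy.1, actF σ ε xy.2)) b → a = b := by
    intro a _ b _ h
    have h1 := congrArg Prod.fst h
    have h2 := congrArg Prod.snd h
    simp only at h1 h2
    exact Prod.ext ((actF σ ε).injective h1) ((actF σ ε).injective h2)
  rw [hfi, hfj, rematches_equivariant, Finset.sum_image hinj]
  refine Finset.sum_congr rfl fun xy hxy => ?_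
  have hcond : ((actS σ ε st').1 =
        Function.update (Function.update (actS σ ε st).1 (σ i) (actF σ ε xy.1))
          (σ j) (actF σ ε xy.2) ∧
      (actS σ ε st').2 = insert (σ j) (actS σ ε st).2)
      ↔ (st'.1 = Function.update (Function.update st.1 i xy.1) j xy.2 ∧
        st'.2 = insert j st.2) := by
    constructor
    · rintro ⟨h1, h2⟩
      constructor
      · apply (Equiv.arrowCongr σ (actF σ ε)).injective
        have hrw : (actS σ ε st).1 = (Equiv.arrowCongr σ (actF σ ε)) st.1 := rfl
        rw [show ((actS σ ε st').1 : Fin ℓ → Finset (Fin ℓ × Bool))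
            = (Equiv.arrowCongr σ (actF σ ε)) st'.1 from rfl, hrw] at h1
        rw [h1, arrowCongr_update, arrowCongr_update]
      · apply Finset.map_injective σ.toEmbedding
        rw [actS_snd, actS_snd] at h2
        rw [h2, Finset.map_insert]
        rfl
    · rintro ⟨h1, h2⟩
      constructor
      · rw [show ((actS σ ε st').1 : Fin ℓ → Finset (Fin ℓ × Bool))
            = (Equiv.arrowCongr σ (actF σ ε)) st'.1 from rfl, h1,
          arrowCongr_update, arrowCongr_update]
        rfl
      · rw [actS_snd, actS_snd, h2, Finset.map_insert]
        rfl
  split_ifs with h1 h2 h3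
  · rw [Finset.card_map, Finset.card_map, Finset.card_image_of_injOn hinj]
  · exact absurd (hcond.1 h1) h2
  · exact absurd (hcond.2 h3) h1
  · rfl

lemma procLaw_equivariant (s : ℕ) (st : LState ℓ) :
    procLaw ℓ s (actS σ ε st) = procLaw ℓ s st := by
  induction s generalizing st with
  | zero => exact initLaw_equivariant σ ε st
  | succ s ih =>
    show ∑ st' : LState ℓ, procLaw ℓ s st' * stepLaw ℓ st' (actS σ ε st)
        = ∑ st' : LState ℓ, procLaw ℓ s st' * stepLaw ℓ st' st
    rw [← Equiv.sum_comp (actS σ ε)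
      (fun st' => procLaw ℓ s st' * stepLaw ℓ st' (actS σ ε st))]
    refine Finset.sum_congr rfl fun st' _ => ?_
    rw [ih st', stepLaw_equivariant]

lemma image_univ_comp_symm (F : Fin ℓ → Finset (Fin ℓ × Bool)) :
    Finset.univ.image (fun k => F (σ.symm k)) = Finset.univ.image F := by
  ext p
  simp only [Finset.mem_image, Finset.mem_univ, true_and]
  constructor
  · rintro ⟨k, hk⟩; exact ⟨σ.symm k, hk⟩
  · rintro ⟨k, hk⟩; exact ⟨σ k, by rw [Equiv.symm_apply_apply]; exact hk⟩

lemma finalLaw_equivariant (η : Finset (Finset (Fin ℓ × Bool))) :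
    finalLaw ℓ (actM σ ε η) = finalLaw ℓ η := by
  unfold finalLaw
  rw [Finset.sum_filter, Finset.sum_filter]
  rw [← Equiv.sum_comp (actS σ ε) (fun st =>
    if Finset.univ.image st.1 = actM σ ε η then procLaw ℓ (ℓ - 1) st else 0)]
  refine Finset.sum_congr rfl fun st _ => ?_
  have himg : Finset.univ.image (actS σ ε st).1 = actM σ ε (Finset.univ.image st.1) := by
    have h1 : Finset.univ.image (actS σ ε st).1
        = Finset.univ.image (fun k => actF σ ε (st.1 (σ.symm k))) := rfl
    rw [h1, image_univ_comp_symm σ (fun k => actF σ ε (st.1 k))]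
    rw [actM, Finset.image_image]
    rfl
  have hcond : (Finset.univ.image (actS σ ε st).1 = actM σ ε η)
      ↔ (Finset.univ.image st.1 = η) := by
    rw [himg]
    exact ⟨fun h => Finset.image_injective (actF σ ε).injective h, fun h => by rw [h]⟩
  rw [if_congr hcond rfl rfl, procLaw_equivariant]

/-! ### Traversal of a single cycle -/

def flipV : (Fin ℓ × Bool) ≃ (Fin ℓ × Bool) where
  toFun x := (x.1, !x.2)
  invFun x := (x.1, !x.2)
  left_inv := by rintro ⟨i, b⟩; simp
  right_inv := by rintro ⟨i, b⟩; simp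

lemma flipV_apply (x : Fin ℓ × Bool) : flipV x = (x.1, !x.2) := rfl

lemma flipV_ne (x : Fin ℓ × Bool) : flipV x ≠ x := by
  intro h
  have := congrArg Prod.snd h
  simp [flipV_apply] at this

lemma flipV_flipV (x : Fin ℓ × Bool) : flipV (flipV x) = x := by
  rcases x with ⟨i, b⟩
  simp [flipV_apply]

variable {η : Finset (Finset (Fin ℓ × Bool))}

lemma exists_partner (hη : IsPMset ℓ η) (x : Fin ℓ × Bool) :
    ∃ y, y ≠ x ∧ ({x, y} : Finset (Fin ℓ × Bool)) ∈ η := by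
  obtain ⟨p, ⟨hpη, hxp⟩, -⟩ := hη.2 x
  obtain ⟨a, b, hab, hp⟩ := Finset.card_eq_two.1 (hη.1 p hpη)
  subst hp
  rcases Finset.mem_insert.1 hxp with rfl | hxb
  · exact ⟨b, Ne.symm hab, hpη⟩
  · rw [Finset.mem_singleton.1 hxb]
    exact ⟨a, fun h => hab (h ▸ rfl), by rwa [Finset.pair_comm]⟩

noncomputable def pfun (η : Finset (Finset (Fin ℓ × Bool))) (x : Fin ℓ × Bool) :
    Fin ℓ × Bool :=
  if h : ∃ y, y ≠ x ∧ ({x, y} : Finset (Fin ℓ × Bool)) ∈ η then h.choose else x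

lemma pfun_ne (hη : IsPMset ℓ η) (x : Fin ℓ × Bool) : pfun η x ≠ x := by
  rw [pfun, dif_pos (exists_partner hη x)]
  exact (exists_partner hη x).choose_spec.1

lemma pfun_mem (hη : IsPMset ℓ η) (x : Fin ℓ × Bool) :
    ({x, pfun η x} : Finset (Fin ℓ × Bool)) ∈ η := by
  rw [pfun, dif_pos (exists_partner hη x)]
  exact (exists_partner hη x).choose_spec.2

lemma pfun_eq (hη : IsPMset ℓ η) {x y : Fin ℓ × Bool} (hne : y ≠ x)
    (hmem : ({x, y} : Finset (Fin ℓ × Bool)) ∈ η) : pfun η x = y := by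
  obtain ⟨p, -, huniq⟩ := hη.2 x
  have h1 : ({x, y} : Finset (Fin ℓ × Bool)) = p := huniq _ ⟨hmem, by simp⟩
  have h2 : ({x, pfun η x} : Finset (Fin ℓ × Bool)) = p := huniq _ ⟨pfun_mem hη x, by simp⟩
  have : y ∈ ({x, pfun η x} : Finset (Fin ℓ × Bool)) := by
    rw [h2, ← h1]; simp
  rcases Finset.mem_insert.1 this with h | h
  · exact absurd h hne
  · exact (Finset.mem_singleton.1 h).symm

lemma pfun_invol (hη : IsPMset ℓ η) (x : Fin ℓ × Bool) : pfun η (pfun η x) = x :=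
  pfun_eq hη (pfun_ne hη x).symm (by rw [Finset.pair_comm]; exact pfun_mem hη x)

lemma card_of_isPMset (hη : IsPMset ℓ η) : η.card = ℓ := by
  have hdisj : ∀ p ∈ η, ∀ q ∈ η, p ≠ q → Disjoint p q := by
    intro p hp q hq hpq
    rw [Finset.disjoint_left]
    intro x hxp hxq
    obtain ⟨r, -, huniq⟩ := hη.2 x
    exact hpq ((huniq p ⟨hp, hxp⟩).trans (huniq q ⟨hq, hxq⟩).symm)
  have hcover : η.biUnion id = Finset.univ := by
    apply Finset.eq_univ_of_forall
    intro x
    obtain ⟨p, ⟨hp, hxp⟩, -⟩ := hη.2 x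
    exact Finset.mem_biUnion.2 ⟨p, hp, hxp⟩
  have h1 : (η.biUnion id).card = ∑ p ∈ η, p.card := Finset.card_biUnion hdisj
  rw [hcover, Finset.card_univ] at h1
  have h2 : ∑ p ∈ η, p.card = 2 * η.card := by
    rw [Finset.sum_congr rfl (fun p hp => hη.1 p hp), Finset.sum_const, smul_eq_mul,
      mul_comm]
  rw [h2] at h1
  have h3 : Fintype.card (Fin ℓ × Bool) = 2 * ℓ := by
    simp [Fintype.card_prod, mul_comm]
  omega

set_option maxHeartbeats 2000000 in
lemma exists_act [NeZero ℓ] (hη : IsPMset ℓ η) (hconn : (pmGraph ℓ η).Connected) :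
    ∃ (σ : Equiv.Perm (Fin ℓ)) (ε : Fin ℓ → Bool),
      actM σ ε (Finset.univ.image
        (fun k : Fin ℓ => ({(k, true), (k + 1, false)} : Finset (Fin ℓ × Bool)))) = η := by
  have hℓ : 1 ≤ ℓ := Nat.one_le_iff_ne_zero.2 (NeZero.ne ℓ)
  set pp : Equiv.Perm (Fin ℓ × Bool) :=
    ⟨pfun η, pfun η, pfun_invol hη, pfun_invol hη⟩ with hpp
  have hpp_apply : ∀ x, pp x = pfun η x := fun x => rfl
  set T : Equiv.Perm (Fin ℓ × Bool) := flipV * pp with hTdef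
  have hT : ∀ x, T x = flipV (pp x) := fun x => rfl
  have hTinv : ∀ x, T⁻¹ x = pp (flipV x) := fun x => rfl
  have hcomm : ∀ x, flipV (T x) = T⁻¹ (flipV x) := by
    intro x
    rw [hT, flipV_flipV, hTinv, flipV_flipV]
  set w0 : Fin ℓ × Bool := ((0 : Fin ℓ), true) with hw0
  set w : ℕ → Fin ℓ × Bool := fun t => (⇑T)^[t] w0 with hw
  have hper : w0 ∈ Function.periodicPts ⇑T := by
    refine Function.mk_mem_periodicPts (orderOf_pos T) ?_
    show (⇑T)^[orderOf T] w0 = w0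
    rw [Equiv.Perm.iterate_eq_pow, pow_orderOf_eq_one]
    rfl
  set n : ℕ := Function.minimalPeriod ⇑T w0 with hndef
  have hn : 0 < n := Function.minimalPeriod_pos_of_mem_periodicPts hper
  have hmod : ∀ t, w (t % n) = w t := fun t => Function.iterate_mod_minimalPeriod_eq
  have hwinj : ∀ t1, t1 < n → ∀ t2, t2 < n → w t1 = w t2 → t1 = t2 := by
    intro t1 h1 t2 h2 h
    exact Function.iterate_injOn_Iio_minimalPeriod h1 h2 h
  have hwsucc : ∀ t, w (t + 1) = T (w t) := fun t => Function.iterate_succ_apply' _ _ _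
  -- adjacency classification
  have hadj : ∀ u v, (pmGraph ℓ η).Adj u v → v = pp u ∨ v = flipV u := by
    intro u v huv'
    obtain ⟨hne, hc | hc⟩ := pmGraph_adj.1 huv'
    · exact Or.inl (pfun_eq hη hne.symm hc).symm
    · refine Or.inr (Prod.ext hc.symm ?_)
      show v.2 = !u.2
      cases hu : u.2 <;> cases hv : v.2
      · exact absurd (Prod.ext hc (hu.trans hv.symm)) hne
      · rfl
      · rfl
      · exact absurd (Prod.ext hc (hu.trans hv.symm)) hne
  -- closure of the orbit under graph adjacency
  have hA_T : ∀ v, (∃ t, w t = v) → ∃ t, w t = T v := by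
    rintro v ⟨t, rfl⟩
    exact ⟨t + 1, hwsucc t⟩
  have hA_Tinv : ∀ v, (∃ t, w t = v) → ∃ t, w t = T⁻¹ v := by
    rintro v ⟨t, rfl⟩
    refine ⟨t + n - 1, ?_⟩
    have h1 : w (t + n) = w t := by
      show (⇑T)^[t + n] w0 = (⇑T)^[t] w0
      rw [Function.iterate_add_apply]
      congr 1
      exact Function.iterate_minimalPeriod
    have h2 : w (t + n) = T (w (t + n - 1)) := by
      rw [show t + n = (t + n - 1) + 1 by omega]
      exact hwsucc _
    rw [← h1, h2, ← Equiv.Perm.mul_apply, inv_mul_cancel, Equiv.Perm.one_apply]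
  have hwalk : ∀ u v (p : (pmGraph ℓ η).Walk u v),
      ((∃ t, w t = u) ∨ (∃ t, w t = flipV u)) →
      ((∃ t, w t = v) ∨ (∃ t, w t = flipV v)) := by
    intro u v p
    induction p with
    | nil => exact id
    | @cons u u' v h p ih =>
      intro hu
      apply ih
      rcases hadj u u' h with h' | h' <;> rw [h']
      · rcases hu with hu | hu
        · obtain ⟨t, rfl⟩ := hu
          exact Or.inr ⟨t + 1, by rw [hwsucc, hT]⟩
        · obtain ⟨t, ht⟩ := hu
          refine Or.inl ?_
          obtain ⟨t', ht'⟩ := hA_Tinv (flipV u) ⟨t, ht⟩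
          exact ⟨t', by rw [ht', hTinv, flipV_flipV]⟩
      · rcases hu with hu | hu
        · exact Or.inr (by rwa [flipV_flipV])
        · exact Or.inl hu
  have hclos : ∀ v, (∃ t, w t = v) ∨ (∃ t, w t = flipV v) := by
    intro v
    obtain ⟨p⟩ := hconn w0 v
    exact hwalk w0 v p (Or.inl ⟨0, rfl⟩)
  have hsurj : ∀ i : Fin ℓ, ∃ t, t < n ∧ (w t).1 = i := by
    intro i
    have h := hclos (i, true)
    have : ∃ t, (w t).1 = i := by
      rcases h with ⟨t, ht⟩ | ⟨t, ht⟩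
      · exact ⟨t, by rw [ht]⟩
      · exact ⟨t, by rw [ht]; rfl⟩
    obtain ⟨t, ht⟩ := this
    exact ⟨t % n, Nat.mod_lt t hn, by rw [hmod]; exact ht⟩
  -- injectivity of the pair indices along the orbit
  have hinj1 : ∀ t1, t1 < n → ∀ t2, t2 < n → (w t1).1 = (w t2).1 → t1 = t2 := by
    intro t1 h1 t2 h2 heq
    rcases eq_or_ne ((w t1).2) ((w t2).2) with hb | hb
    · exact hwinj t1 h1 t2 h2 (Prod.ext heq hb)
    -- flip case: derive a contradiction
    exfalso
    have hflip : w t2 = flipV (w t1) := by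
      refine Prod.ext heq.symm ?_
      rcases Bool.eq_false_or_eq_true (w t1).2 with h | h <;> rw [flipV_apply, h] <;>
        rcases Bool.eq_false_or_eq_true (w t2).2 with h' | h' <;> simp_all
    have ht12 : t1 ≠ t2 := fun h => hb (h ▸ rfl)
    have hn2 : 2 ≤ n := by omega
    haveI : NeZero n := ⟨by omega⟩
    haveI : Fact (1 < n) := ⟨by omega⟩
    set ω : ZMod n → Fin ℓ × Bool := fun z => w z.val with hω
    have hωsucc : ∀ z : ZMod n, ω (z + 1) = T (ω z) := by
      intro z
      show w ((z + 1).val) = T (w z.val)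
      have hv : (z + 1).val = (z.val + 1) % n := by
        rw [ZMod.val_add, ZMod.val_one]
      rw [hv, hmod, hwsucc]
    have hωpred : ∀ z : ZMod n, T⁻¹ (ω z) = ω (z - 1) := by
      intro z
      have := hωsucc (z - 1)
      rw [sub_add_cancel] at this
      rw [this, ← Equiv.Perm.mul_apply, inv_mul_cancel, Equiv.Perm.one_apply]
    have hωinj : Function.Injective ω := by
      intro z1 z2 h
      have := hwinj _ (ZMod.val_lt z1) _ (ZMod.val_lt z2) h
      exact ZMod.natCast_rightInverse.injective this
    set a : ZMod n := ((t2 : ℕ) : ZMod n) with ha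
    set b : ZMod n := ((t1 : ℕ) : ZMod n) with hbdef
    have hωb : ω b = w t1 := by
      show w ((t1 : ZMod n)).val = w t1
      rw [ZMod.val_cast_of_lt h1]
    have hωa : ω a = w t2 := by
      show w ((t2 : ZMod n)).val = w t2
      rw [ZMod.val_cast_of_lt h2]
    have hbase : flipV (ω b) = ω a := by rw [hωb, hωa, hflip]
    have hrel : ∀ s : ℕ, flipV (ω (b + s)) = ω (a - s) := by
      intro s
      induction s with
      | zero => simpa using hbase
      | succ s ih =>
        have h1' : (b + (s + 1 : ℕ)) = (b + s) + 1 := by push_cast; ring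
        have h2' : (a - (s + 1 : ℕ)) = (a - s) - 1 := by push_cast; ring
        rw [h1', h2', hωsucc, hcomm, ih, hωpred]
    have hrelz : ∀ t : ZMod n, flipV (ω t) = ω (a + b - t) := by
      intro t
      have h0 := hrel (t - b).val
      rw [ZMod.natCast_rightInverse (t - b)] at h0
      rw [show b + (t - b) = t by ring] at h0
      rw [show a - (t - b) = a + b - t by ring] at h0
      exact h0
    have hdouble : ∀ t : ZMod n, a + b ≠ t + t := by
      intro t heq
      have := hrelz t
      rw [heq, show t + t - t = t by ring] at this
      exact flipV_ne (ω t) this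
    have hdouble1 : ∀ t : ZMod n, a + b - 1 ≠ t + t := by
      intro t heq
      have h1' : pp (ω t) = flipV (T (ω t)) := by
        rw [hT, flipV_flipV]
      rw [← hωsucc, hrelz] at h1'
      have h2' : a + b - (t + 1) = t := by
        have : a + b = t + t + 1 := by rw [← heq]; ring
        rw [this]; ring
      rw [h2'] at h1'
      exact pfun_ne hη (ω t) h1'
    rcases Nat.even_or_odd (a + b).val with ⟨k, hk⟩ | ⟨k, hk⟩
    · refine hdouble (k : ZMod n) ?_
      have : ((a + b).val : ZMod n) = a + b := ZMod.natCast_rightInverse _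
      rw [← this, hk]
      push_cast
      ring
    · refine hdouble1 (k : ZMod n) ?_
      have : ((a + b).val : ZMod n) = a + b := ZMod.natCast_rightInverse _
      rw [← this, hk]
      push_cast
      ring
  -- n = ℓ
  have hnℓ : n = ℓ := by
    have hle : n ≤ ℓ := by
      have : Function.Injective (fun t : Fin n => (w t.val).1) := by
        intro t1 t2 h
        exact Fin.ext (hinj1 t1.val t1.isLt t2.val t2.isLt h)
      simpa using Fintype.card_le_of_injective _ this
    have hge : ℓ ≤ n := by
      have : Function.Surjective (fun t : Fin n => (w t.val).1) := by
        intro i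
        obtain ⟨t, htn, ht⟩ := hsurj i
        exact ⟨⟨t, htn⟩, ht⟩
      simpa using Fintype.card_le_of_surjective _ this
    omega
  -- build σ and ε
  have hfinj : Function.Injective (fun k : Fin ℓ => (w k.val).1) := by
    intro k1 k2 h
    have hk1 : k1.val < n := by have := k1.isLt; omega
    have hk2 : k2.val < n := by have := k2.isLt; omega
    exact Fin.ext (hinj1 k1.val hk1 k2.val hk2 h)
  have hfbij : Function.Bijective (fun k : Fin ℓ => (w k.val).1) :=
    (Fintype.bijective_iff_injective_and_card _).2 ⟨hfinj, rfl⟩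
  obtain ⟨σ, hσ_apply⟩ : ∃ σ : Equiv.Perm (Fin ℓ), ∀ k : Fin ℓ, σ k = (w k.val).1 :=
    ⟨Equiv.ofBijective _ hfbij, fun k => rfl⟩
  obtain ⟨ε, hε_apply⟩ : ∃ ε : Fin ℓ → Bool, ∀ k : Fin ℓ, ε k = !(w k.val).2 :=
    ⟨_, fun k => rfl⟩
  have hgm1 : ∀ k : Fin ℓ, gmap σ ε (k, true) = w k.val := by
    intro k
    refine Prod.ext ?_ ?_
    · exact hσ_apply k
    · show xor (ε k) true = (w k.val).2
      rw [hε_apply, Bool.xor_true, Bool.not_not]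
  have hgm2 : ∀ k : Fin ℓ, gmap σ ε (k, false) = flipV (w k.val) := by
    intro k
    refine Prod.ext ?_ ?_
    · exact hσ_apply k
    · show xor (ε k) false = (flipV (w k.val)).2
      rw [hε_apply, Bool.xor_false]
      rfl
  have hsucc_val : ∀ k : Fin ℓ, w ((k + 1 : Fin ℓ)).val = w (k.val + 1) := by
    intro k
    have h1' : ((k + 1 : Fin ℓ)).val = (k.val + 1) % ℓ := by
      rw [Fin.add_def]
      simp only [Fin.val_one']
      conv_rhs => rw [Nat.add_mod, Nat.mod_eq_of_lt k.isLt]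
    have hmodℓ : w ((k.val + 1) % ℓ) = w (k.val + 1) := by
      have := hmod (k.val + 1)
      rwa [hnℓ] at this
    rw [h1', hmodℓ]
  have hpair : ∀ k : Fin ℓ,
      actF σ ε ({(k, true), (k + 1, false)} : Finset (Fin ℓ × Bool)) ∈ η := by
    intro k
    have himg : actF σ ε ({(k, true), (k + 1, false)} : Finset (Fin ℓ × Bool))
        = {gmap σ ε (k, true), gmap σ ε (k + 1, false)} := by
      rw [actF, Equiv.finsetCongr_apply, Finset.map_insert, Finset.map_singleton]
      rfl
    rw [himg, hgm1, hgm2, hsucc_val]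
    have : flipV (w (k.val + 1)) = pp (w k.val) := by
      rw [hwsucc, hT, flipV_flipV]
    rw [this, hpp_apply]
    exact pfun_mem hη (w k.val)
  refine ⟨σ, ε, ?_⟩
  rw [actM, Finset.image_image]
  apply Finset.eq_of_subset_of_card_le
  · intro p hp
    obtain ⟨k, -, hk⟩ := Finset.mem_image.1 hp
    rw [← hk]
    exact hpair k
  · rw [card_of_isPMset hη]
    rw [Finset.card_image_of_injective _ ((actF σ ε).injective.comp ?_)]
    · rw [Finset.card_univ, Fintype.card_fin]
    · intro k1 k2 h
      replace h : ({(k1, true), (k1 + 1, false)} : Finset (Fin ℓ × Bool))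
          = {(k2, true), (k2 + 1, false)} := h
      have : ((k1 : Fin ℓ), true) ∈ ({(k2, true), (k2 + 1, false)} : Finset (Fin ℓ × Bool)) := by
        rw [← h]; simp
      simp only [Finset.mem_insert, Finset.mem_singleton, Prod.mk.injEq] at this
      rcases this with ⟨h', -⟩ | ⟨-, h'⟩
      · exact h'
      · exact absurd h' (by simp)

end SwapAux

/-- the algorithm generating a matching by `ℓ - 1` successive swaps
outputs a uniformly random single-cycle `ℓ`-PM. -/
theorem uniform_cycle_via_swaps (ℓ : ℕ) (hℓ : 1 ≤ ℓ) :
    ∀ η : Finset (Finset (Fin ℓ × Bool)),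
      finalLaw ℓ η =
        if η ∈ singleCycles ℓ then ((singleCycles ℓ).card : ℝ)⁻¹ else 0 := by
  haveI : NeZero ℓ := ⟨by omega⟩
  intro η
  by_cases hη : η ∈ singleCycles ℓ
  · rw [if_pos hη]
    set B : Finset (Finset (Fin ℓ × Bool)) := Finset.univ.image
      (fun k : Fin ℓ => ({(k, true), (k + 1, false)} : Finset (Fin ℓ × Bool))) with hB
    have hconst : ∀ η' ∈ singleCycles ℓ, finalLaw ℓ η' = finalLaw ℓ B := by
      intro η' hη'
      rw [singleCycles, Finset.mem_filter] at hη'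
      obtain ⟨-, hPM, hconn⟩ := hη'
      obtain ⟨σ, ε, hact⟩ := SwapAux.exists_act hPM hconn
      rw [← hact, SwapAux.finalLaw_equivariant]
    have hsum1 : ∑ η' ∈ singleCycles ℓ, finalLaw ℓ η' = 1 := by
      rw [← SwapAux.sum_finalLaw hℓ]
      exact Finset.sum_subset (Finset.subset_univ _) (fun x _ hx => by
        by_contra h
        exact hx (SwapAux.final_support hℓ h))
    rw [Finset.sum_congr rfl hconst, Finset.sum_const, nsmul_eq_mul] at hsum1
    rw [hconst η hη]
    exact (inv_eq_of_mul_eq_one_right hsum1).symm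
  · rw [if_neg hη]
    by_contra h
    exact hη (SwapAux.final_support hℓ h)

end
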